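/- arXiv:1910.03669 — 4 statements merged into one kernel-verified Lean document; each statement's English description precedes it below -/
import Mathlib

section
/- For every λ > 0 there exists a number α₁*(λ) with 0 < α₁*(λ) < 1 such that for all α with 0 < α < α₁*(λ) one has exp(−λ/2) · Σ_{k=0}^∞ (λ/2)^k/k! · (1 − (1−α)^{2k+1}) > exp(−2λ) · Σ_{k=0}^∞ (2λ)^k/k! · [Γ(k + 3/2)/(Γ(1/2)·k!)] · ∫_0^{α²} b^{−1/2}(1−b)^k db, with equality when α = α₁*(λ). (This is the statement π_α(λ;1,2) > π_α(4λ;2,1) of Proposition 4.3 for l = 1, i.e. the power of the size-α univariate t²-test with 2 denominator degrees of freedom at noncentrality λ exceeds the power of the size-α bivariate T²-test at noncentrality 4λ.) -/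
open Real

/-- Power of the size-`α` univariate `t²`-test (`m = 1`, `n = 2`) at noncentrality `lam`:
`π_α(λ;1,2) = e^{-λ/2} Σ (λ/2)^k/k! · (1 - (1-α)^{2k+1})`. -/
noncomputable def pow12 (lam α : ℝ) : ℝ :=
  Real.exp (-lam / 2) *
    ∑' k : ℕ, (lam / 2) ^ k / (Nat.factorial k : ℝ) * (1 - (1 - α) ^ (2 * k + 1))

/-- Power of the size-`α` bivariate `T²`-test (`m = 2`, `n = 1`) at noncentrality `4·lam`:
`π_α(4λ;2,1) = e^{-2λ} Σ (2λ)^k/k! · [Γ(k+3/2)/(Γ(1/2)k!)] ∫_0^{α²} b^{-1/2}(1-b)^k db`. -/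
noncomputable def pow21 (lam α : ℝ) : ℝ :=
  Real.exp (-2 * lam) *
    ∑' k : ℕ, (2 * lam) ^ k / (Nat.factorial k : ℝ) *
      (Real.Gamma ((k : ℝ) + 3 / 2) / (Real.Gamma (1 / 2) * (Nat.factorial k : ℝ))) *
      ∫ b in (0 : ℝ)..(α ^ 2), b ^ (-(1 / 2) : ℝ) * (1 - b) ^ k

/-!
Both powers are Poisson mixtures `E[c_K]`. Through the generating function `E[z^K] = e^{x(z-1)}` of
the Poisson law, the first has the closed form `1 - (1-α) e^{-λα(2-α)/2}`, whose slope at `α = 0`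
is `1 + λ`. Since `c_{2,1;k;α} ≤ 2α / B(1/2, k+1)`, the second is at most `Qα` with
`Q = E[2 / B(1/2, K+1)]`, `K ~ Poisson(2λ)`; the recursion for `1 / B(1/2, k+1)` gives
`2 / B(1/2, k+1) ≤ 1 + k/2`, strictly for `k = 2`, so `Q < 1 + λ` and the first power wins for
small `α`. Near `α = 1` the tail bound `1 - c_{2,1;k;α} ≤ (1-α²)^{k+1} / (2α)` yields
`1 - π_α(4λ;2,1) ≤ (1-α)(1+α)/(2α) · e^{-2λα²}`, which is eventually below
`1 - π_α(λ;1,2) = (1-α) e^{-λα(2-α)/2}` because `e^{-2λ} < e^{-λ/2}`. The first zero of the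
continuous difference beyond the initial region of positivity is `α₁*(λ)`.
-/

open Filter Topology Set MeasureTheory
open scoped Nat

lemma exists_first_zero {f : ℝ → ℝ} {a b : ℝ} (hab : a ≤ b) (hf : ContinuousOn f (Icc a b))
    (ha : 0 < f a) (hb : f b ≤ 0) : ∃ c ∈ Ioc a b, f c = 0 ∧ ∀ x ∈ Ico a c, 0 < f x := by
  set S := Icc a b ∩ f ⁻¹' Iic 0
  have hbdd : BddBelow S := ⟨a, fun x hx => hx.1.1⟩
  have hcS : sInf S ∈ S := (hf.preimage_isClosed_of_isClosed isClosed_Icc isClosed_Iic).csInf_mem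
    ⟨b, ⟨hab, le_rfl⟩, hb⟩ hbdd
  have hpos : ∀ x ∈ Ico a (sInf S), 0 < f x := fun x hx => by
    by_contra! hx'
    exact (csInf_le hbdd ⟨⟨hx.1, hx.2.le.trans hcS.1.2⟩, hx'⟩).not_gt hx.2
  obtain ⟨d, hd, hfd⟩ := intermediate_value_Icc' hcS.1.1 (hf.mono (Icc_subset_Icc_right hcS.1.2))
    ⟨hcS.2, ha.le⟩
  have hdc : d = sInf S := hd.2.antisymm (not_lt.1 fun h => (hpos d ⟨hd.1, h⟩).ne' hfd)
  have had : a < d := hd.1.lt_of_ne (by rintro rfl; exact ha.ne' hfd)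
  exact ⟨sInf S, ⟨hdc ▸ had, hcS.1.2⟩, hdc ▸ hfd, hpos⟩

lemma natCast_add_one_le_two_pow (k : ℕ) : (k : ℝ) + 1 ≤ 2 ^ k := by
  exact_mod_cast Nat.lt_two_pow_self

lemma summable_pow_div_factorial_mul {g : ℕ → ℝ} {C r : ℝ} (x : ℝ) (hg : ∀ k, |g k| ≤ C * r ^ k) :
    Summable fun k => x ^ k / k ! * g k := by
  refine Summable.of_norm_bounded ((summable_pow_div_factorial (|x| * r)).mul_left C) fun k => ?_
  rw [Real.norm_eq_abs, abs_mul, abs_div, abs_pow, Nat.abs_cast, mul_pow]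
  calc |x| ^ k / k ! * |g k| ≤ |x| ^ k / k ! * (C * r ^ k) := by gcongr; exact hg k
    _ = C * (|x| ^ k * r ^ k / k !) := by ring

lemma summable_pow_div_factorial_mul_pow (x c z : ℝ) :
    Summable fun k => x ^ k / k ! * (c * z ^ k) :=
  summable_pow_div_factorial_mul (C := |c|) (r := |z|) x fun k => by rw [abs_mul, abs_pow]

lemma summable_pow_div_factorial_mul_of_mem_Icc {g : ℕ → ℝ} (x : ℝ) (hg : ∀ k, g k ∈ Icc 0 1) :
    Summable fun k => x ^ k / k ! * g k :=
  summable_pow_div_factorial_mul (C := 1) (r := 1) x fun k => by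
    rw [one_pow, mul_one, abs_le]
    constructor <;> linarith [(hg k).1, (hg k).2]

lemma summable_pow_div_factorial_mul_natCast (x : ℝ) : Summable fun k => x ^ k / k ! * (k : ℝ) :=
  summable_pow_div_factorial_mul (C := 1) (r := 2) x fun k => by
    rw [Nat.abs_cast, one_mul]
    linarith [natCast_add_one_le_two_pow k]

lemma tsum_pow_div_factorial (x : ℝ) : ∑' k : ℕ, x ^ k / k ! = exp x := by
  rw [exp_eq_exp_ℝ, NormedSpace.exp_eq_tsum_div]

noncomputable def poissonMean (x : ℝ) (g : ℕ → ℝ) : ℝ :=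
  exp (-x) * ∑' k : ℕ, x ^ k / k ! * g k

lemma poissonMean_pow (x z : ℝ) : poissonMean x (fun k => z ^ k) = exp (x * (z - 1)) := by
  simp_rw [poissonMean, div_mul_eq_mul_div, ← mul_pow, tsum_pow_div_factorial, ← exp_add]
  ring_nf

lemma poissonMean_const (x c : ℝ) : poissonMean x (fun _ => c) = c := by
  rw [poissonMean, tsum_mul_right, tsum_pow_div_factorial, ← mul_assoc, ← exp_add,
    neg_add_cancel, exp_zero, one_mul]

lemma poissonMean_natCast (x : ℝ) : poissonMean x (fun k => (k : ℝ)) = x := by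
  have hshift : ∀ k : ℕ, x ^ (k + 1) / ((k + 1)! : ℝ) * ((k + 1 : ℕ) : ℝ) = x * (x ^ k / k !) := by
    intro k
    rw [Nat.factorial_succ, Nat.cast_mul, pow_succ]
    have : (k ! : ℝ) ≠ 0 := by positivity
    field_simp
  have hs : Summable fun k : ℕ => x ^ (k + 1) / ((k + 1)! : ℝ) * ((k + 1 : ℕ) : ℝ) := by
    simpa only [hshift] using (summable_pow_div_factorial x).mul_left x
  rw [poissonMean, tsum_eq_zero_add' (f := fun k : ℕ => x ^ k / k ! * (k : ℝ)) hs]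
  simp only [hshift, tsum_mul_left, tsum_pow_div_factorial, Nat.cast_zero, mul_zero, zero_add]
  rw [mul_left_comm, ← exp_add, neg_add_cancel, exp_zero, mul_one]

lemma poissonMean_const_mul (x c : ℝ) (g : ℕ → ℝ) :
    poissonMean x (fun k => c * g k) = c * poissonMean x g := by
  simp only [poissonMean, mul_left_comm _ c, tsum_mul_left]

section

variable {x : ℝ} {g h : ℕ → ℝ}

lemma poissonMean_add (hg : Summable fun k => x ^ k / k ! * g k)
    (hh : Summable fun k => x ^ k / k ! * h k) :
    poissonMean x (fun k => g k + h k) = poissonMean x g + poissonMean x h := by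
  simp only [poissonMean, mul_add, hg.tsum_add hh]

lemma poissonMean_sub (hg : Summable fun k => x ^ k / k ! * g k)
    (hh : Summable fun k => x ^ k / k ! * h k) :
    poissonMean x (fun k => g k - h k) = poissonMean x g - poissonMean x h := by
  simp only [poissonMean, mul_sub, hg.tsum_sub hh]

lemma poissonMean_mono (hx : 0 ≤ x) (hgh : ∀ k, g k ≤ h k)
    (hg : Summable fun k => x ^ k / k ! * g k) (hh : Summable fun k => x ^ k / k ! * h k) :
    poissonMean x g ≤ poissonMean x h := by
  refine mul_le_mul_of_nonneg_left (hg.tsum_le_tsum (fun k => ?_) hh) (exp_pos _).le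
  exact mul_le_mul_of_nonneg_left (hgh k) (by positivity)

lemma poissonMean_lt (hx : 0 < x) (hgh : ∀ k, g k ≤ h k) {i : ℕ} (hi : g i < h i)
    (hg : Summable fun k => x ^ k / k ! * g k) (hh : Summable fun k => x ^ k / k ! * h k) :
    poissonMean x g < poissonMean x h := by
  refine mul_lt_mul_of_pos_left (hg.tsum_lt_tsum (i := i) (fun k => ?_) ?_ hh) (exp_pos _)
  · exact mul_le_mul_of_nonneg_left (hgh k) (by positivity)
  · exact mul_lt_mul_of_pos_left hi (by positivity)

end

lemma pow12_eq (lam α : ℝ) : pow12 lam α = 1 - (1 - α) * exp (-(lam / 2) * (α * (2 - α))) := by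
  have hpoisson : pow12 lam α = poissonMean (lam / 2) fun k => 1 - (1 - α) * ((1 - α) ^ 2) ^ k := by
    simp only [pow12, poissonMean, neg_div, ← pow_mul, ← pow_succ']
  rw [hpoisson, poissonMean_sub (summable_pow_div_factorial_mul_of_mem_Icc _ fun _ =>
      ⟨zero_le_one, le_rfl⟩) (summable_pow_div_factorial_mul_pow _ _ _),
    poissonMean_const, poissonMean_const_mul, poissonMean_pow]
  ring_nf

lemma hasDerivAt_pow12 (lam : ℝ) : HasDerivAt (pow12 lam) (1 + lam) 0 := by
  have hinner : HasDerivAt (fun α : ℝ => -(lam / 2) * (α * (2 - α))) (-(lam / 2) * 2) 0 := by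
    simpa using ((hasDerivAt_id (0 : ℝ)).mul ((hasDerivAt_id 0).const_sub 2)).const_mul (-(lam / 2))
  rw [funext (pow12_eq lam)]
  refine ((((hasDerivAt_id (0 : ℝ)).const_sub 1).mul hinner.exp).const_sub 1).congr_deriv ?_
  norm_num [add_comm]

lemma continuous_pow12 (lam : ℝ) : Continuous (pow12 lam) := by
  rw [funext (pow12_eq lam)]
  fun_prop

lemma integral_rpow_mul_one_sub_pow {s : ℝ} (hs : 0 < s) (k : ℕ) :
    ∫ b in (0 : ℝ)..1, b ^ (s - 1) * (1 - b) ^ k = Gamma s * k ! / Gamma (s + k + 1) := by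
  have hcast : ((∫ b in (0 : ℝ)..1, b ^ (s - 1) * (1 - b) ^ k : ℝ) : ℂ)
      = Complex.betaIntegral s (k + 1) := by
    rw [← intervalIntegral.integral_ofReal, Complex.betaIntegral]
    refine intervalIntegral.integral_congr fun b hb => ?_
    rw [uIcc_of_le zero_le_one] at hb
    simp only [add_sub_cancel_right, Complex.cpow_natCast]
    push_cast [Complex.ofReal_cpow hb.1]
    rfl
  rw [← Complex.ofReal_inj, hcast, Complex.betaIntegral_eq_Gamma_mul_div _ _ (by simpa)
    (by simp; positivity), Complex.Gamma_nat_eq_factorial]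
  push_cast [← Complex.Gamma_ofReal]
  ring_nf

noncomputable def invBeta (k : ℕ) : ℝ := Gamma (k + 3 / 2) / (Gamma (1 / 2) * k !)

lemma invBeta_zero : invBeta 0 = 1 / 2 := by
  have := Gamma_pos_of_pos (one_half_pos (α := ℝ))
  rw [invBeta, show ((0 : ℕ) : ℝ) + 3 / 2 = 1 / 2 + 1 by norm_num, Gamma_add_one (by norm_num)]
  field_simp
  simp

lemma invBeta_succ (k : ℕ) : invBeta (k + 1) = invBeta k * ((2 * k + 3) / (2 * (k + 1))) := by
  have := Gamma_pos_of_pos (one_half_pos (α := ℝ))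
  rw [invBeta, invBeta, show ((k + 1 : ℕ) : ℝ) + 3 / 2 = (k + 3 / 2) + 1 by push_cast; ring,
    Gamma_add_one (by positivity), Nat.factorial_succ, Nat.cast_mul]
  field_simp
  push_cast
  ring

lemma invBeta_pos (k : ℕ) : 0 < invBeta k :=
  div_pos (Gamma_pos_of_pos (by positivity))
    (mul_pos (Gamma_pos_of_pos one_half_pos) (by positivity))

lemma invBeta_le (k : ℕ) : invBeta k ≤ (k + 2) / 4 := by
  induction k with
  | zero => norm_num [invBeta_zero]
  | succ k ih =>
    rw [invBeta_succ]
    calc invBeta k * ((2 * k + 3) / (2 * (k + 1)))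
        ≤ (k + 2) / 4 * ((2 * k + 3) / (2 * (k + 1))) := by gcongr
      _ ≤ ((k + 1 : ℕ) + 2) / 4 := by
          push_cast
          rw [div_mul_div_comm, div_le_div_iff₀ (by positivity) (by norm_num)]
          nlinarith

lemma invBeta_two : invBeta 2 = 15 / 16 := by
  rw [invBeta_succ, invBeta_succ, invBeta_zero]
  norm_num

lemma summable_pow_div_factorial_mul_invBeta (x : ℝ) :
    Summable fun k => x ^ k / k ! * (2 * invBeta k) :=
  summable_pow_div_factorial_mul (C := 1) (r := 2) x fun k => by
    rw [abs_of_pos (by linarith [invBeta_pos k]), one_mul]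
    linarith [invBeta_le k, natCast_add_one_le_two_pow k, (Nat.cast_nonneg k : (0 : ℝ) ≤ k)]

/-- The distribution function of the Beta(1/2, k + 1) law: `c_{2,1;k;α} = betaCDF k (α²)`. -/
noncomputable def betaCDF (k : ℕ) (t : ℝ) : ℝ :=
  invBeta k * ∫ b in (0 : ℝ)..t, b ^ (-(1 / 2) : ℝ) * (1 - b) ^ k

lemma intervalIntegrable_rpow_mul_one_sub_pow (k : ℕ) (s t : ℝ) :
    IntervalIntegrable (fun b : ℝ => b ^ (-(1 / 2) : ℝ) * (1 - b) ^ k) volume s t :=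
  (intervalIntegral.intervalIntegrable_rpow' (by norm_num)).mul_continuousOn (by fun_prop)

lemma integral_rpow_mul_one_sub_pow_nonneg (k : ℕ) {s t : ℝ} (hs : 0 ≤ s) (hst : s ≤ t)
    (ht : t ≤ 1) : 0 ≤ ∫ b in s..t, b ^ (-(1 / 2) : ℝ) * (1 - b) ^ k :=
  intervalIntegral.integral_nonneg hst fun b hb =>
    mul_nonneg (rpow_nonneg (hs.trans hb.1) _) (pow_nonneg (by linarith [hb.2]) k)

lemma betaCDF_one (k : ℕ) : betaCDF k 1 = 1 := by
  have := Gamma_pos_of_pos (one_half_pos (α := ℝ))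
  have := Gamma_pos_of_pos (show (0 : ℝ) < k + 3 / 2 by positivity)
  rw [betaCDF, show (-(1 / 2) : ℝ) = 1 / 2 - 1 by norm_num,
    integral_rpow_mul_one_sub_pow one_half_pos, invBeta,
    show (1 / 2 : ℝ) + k + 1 = k + 3 / 2 by ring]
  field_simp

lemma one_sub_betaCDF (k : ℕ) (t : ℝ) :
    1 - betaCDF k t = invBeta k * ∫ b in t..1, b ^ (-(1 / 2) : ℝ) * (1 - b) ^ k := by
  nth_rewrite 1 [← betaCDF_one k]
  rw [betaCDF, betaCDF, ← mul_sub,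
    intervalIntegral.integral_interval_sub_left (intervalIntegrable_rpow_mul_one_sub_pow k _ _)
      (intervalIntegrable_rpow_mul_one_sub_pow k _ _)]

lemma betaCDF_mem_Icc (k : ℕ) {t : ℝ} (h0 : 0 ≤ t) (h1 : t ≤ 1) : betaCDF k t ∈ Icc 0 1 := by
  refine ⟨mul_nonneg (invBeta_pos k).le (integral_rpow_mul_one_sub_pow_nonneg k le_rfl h0 h1), ?_⟩
  have := mul_nonneg (invBeta_pos k).le (integral_rpow_mul_one_sub_pow_nonneg k h0 h1 le_rfl)
  linarith [one_sub_betaCDF k t]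

lemma continuous_betaCDF (k : ℕ) : Continuous (betaCDF k) :=
  continuous_const.mul
    (intervalIntegral.continuous_primitive (intervalIntegrable_rpow_mul_one_sub_pow k) 0)

lemma betaCDF_sq_le (k : ℕ) {α : ℝ} (h0 : 0 ≤ α) (h1 : α ≤ 1) :
    betaCDF k (α ^ 2) ≤ 2 * invBeta k * α := by
  have hsq : α ^ 2 ≤ 1 := pow_le_one₀ h0 h1
  have hint : ∫ b in (0 : ℝ)..α ^ 2, b ^ (-(1 / 2) : ℝ) = 2 * α := by
    rw [integral_rpow (Or.inl (by norm_num)), show -(1 / 2 : ℝ) + 1 = 1 / 2 by norm_num,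
      ← sqrt_eq_rpow, sqrt_sq h0, zero_rpow (by norm_num)]
    ring
  rw [betaCDF, mul_comm 2, mul_assoc, ← hint]
  refine mul_le_mul_of_nonneg_left (intervalIntegral.integral_mono_on (sq_nonneg α)
    (intervalIntegrable_rpow_mul_one_sub_pow k _ _)
    (intervalIntegral.intervalIntegrable_rpow' (by norm_num)) fun b hb => ?_) (invBeta_pos k).le
  exact mul_le_of_le_one_right (rpow_nonneg hb.1 _)
    (pow_le_one₀ (by linarith [hb.2]) (by linarith [hb.1]))

lemma one_sub_betaCDF_sq_le (k : ℕ) {β : ℝ} (h0 : 0 < β) (h1 : β ≤ 1) :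
    1 - betaCDF k (β ^ 2) ≤ (1 - β ^ 2) ^ (k + 1) / (2 * β) := by
  have hsq : β ^ 2 ≤ 1 := pow_le_one₀ h0.le h1
  have hrpow : ∀ b ∈ Icc (β ^ 2) 1, b ^ (-(1 / 2) : ℝ) * (1 - b) ^ k ≤ β⁻¹ * (1 - b) ^ k := by
    intro b hb
    refine mul_le_mul_of_nonneg_right ?_ (pow_nonneg (by linarith [hb.2]) k)
    calc b ^ (-(1 / 2) : ℝ) ≤ (β ^ 2) ^ (-(1 / 2) : ℝ) :=
          rpow_le_rpow_of_nonpos (by positivity) hb.1 (by norm_num)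
      _ = β⁻¹ := by rw [rpow_neg (sq_nonneg β), ← sqrt_eq_rpow, sqrt_sq h0.le]
  have hint : ∫ b in β ^ 2..1, β⁻¹ * (1 - b) ^ k = β⁻¹ * ((1 - β ^ 2) ^ (k + 1) / (k + 1)) := by
    rw [intervalIntegral.integral_const_mul, intervalIntegral.integral_comp_sub_left
      (fun b => b ^ k), sub_self, integral_pow]
    norm_num
  have hle := intervalIntegral.integral_mono_on hsq
    (intervalIntegrable_rpow_mul_one_sub_pow k _ _)
    (Continuous.intervalIntegrable (by fun_prop) _ _) hrpow
  rw [hint] at hle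
  rw [one_sub_betaCDF]
  calc invBeta k * ∫ b in β ^ 2..1, b ^ (-(1 / 2) : ℝ) * (1 - b) ^ k
      ≤ (k + 1) / 2 * (β⁻¹ * ((1 - β ^ 2) ^ (k + 1) / (k + 1))) := by
        gcongr
        · exact integral_rpow_mul_one_sub_pow_nonneg k (sq_nonneg β) hsq le_rfl
        · linarith [invBeta_le k, (Nat.cast_nonneg k : (0 : ℝ) ≤ k)]
    _ = (1 - β ^ 2) ^ (k + 1) / (2 * β) := by field_simp

lemma pow21_eq_poissonMean (lam α : ℝ) :
    pow21 lam α = poissonMean (2 * lam) fun k => betaCDF k (α ^ 2) := by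
  simp only [pow21, poissonMean, betaCDF, invBeta, neg_mul, mul_assoc]

lemma betaCDF_sq_mem_Icc (k : ℕ) {α : ℝ} (hα : α ∈ Icc 0 1) : betaCDF k (α ^ 2) ∈ Icc 0 1 :=
  betaCDF_mem_Icc k (sq_nonneg α) (pow_le_one₀ hα.1 hα.2)

lemma continuousOn_pow21 (lam : ℝ) : ContinuousOn (pow21 lam) (Icc 0 1) := by
  rw [funext (pow21_eq_poissonMean lam)]
  refine continuousOn_const.mul (continuousOn_tsum (u := fun k => |2 * lam| ^ k / k !)
    (fun k => (continuous_const.mul ((continuous_betaCDF k).comp (continuous_pow 2))).continuousOn)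
    (summable_pow_div_factorial _) fun k α hα => ?_)
  have hF := betaCDF_sq_mem_Icc k hα
  rw [Real.norm_eq_abs, abs_mul, abs_div, abs_pow, Nat.abs_cast, abs_of_nonneg hF.1]
  exact mul_le_of_le_one_right (by positivity) hF.2

lemma pow21_le {lam α : ℝ} (hl : 0 ≤ lam) (h0 : 0 ≤ α) (h1 : α ≤ 1) :
    pow21 lam α ≤ poissonMean (2 * lam) (fun k => 2 * invBeta k) * α := by
  rw [pow21_eq_poissonMean, mul_comm _ α, ← poissonMean_const_mul]
  exact poissonMean_mono (by positivity)
    (fun k => (betaCDF_sq_le k h0 h1).trans_eq (by ring))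
    (summable_pow_div_factorial_mul_of_mem_Icc _ fun k => betaCDF_sq_mem_Icc k ⟨h0, h1⟩)
    (((summable_pow_div_factorial_mul_invBeta (2 * lam)).mul_left α).congr fun k => by ring)

lemma poissonMean_two_mul_invBeta_lt {y : ℝ} (hy : 0 < y) :
    poissonMean y (fun k => 2 * invBeta k) < 1 + y / 2 := by
  have hmean : poissonMean y (fun k => 1 + 1 / 2 * (k : ℝ)) = 1 + y / 2 := by
    rw [poissonMean_add (summable_pow_div_factorial_mul_of_mem_Icc y fun _ => ⟨zero_le_one, le_rfl⟩)
      (((summable_pow_div_factorial_mul_natCast y).mul_left (1 / 2)).congr fun k => by ring),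
      poissonMean_const, poissonMean_const_mul, poissonMean_natCast]
    ring
  rw [← hmean]
  refine poissonMean_lt hy (fun k => by linarith [invBeta_le k]) (i := 2)
    (by rw [invBeta_two]; norm_num) (summable_pow_div_factorial_mul_invBeta y)
    (((summable_pow_div_factorial_mul_natCast y).mul_left (1 / 2)).add
      (summable_pow_div_factorial_mul_of_mem_Icc y fun _ => ⟨zero_le_one, le_rfl⟩) |>.congr
      fun k => by ring)

lemma one_sub_pow21_le {lam β : ℝ} (hl : 0 ≤ lam) (h0 : 0 < β) (h1 : β ≤ 1) :
    1 - pow21 lam β ≤ (1 - β ^ 2) / (2 * β) * exp (-(2 * lam) * β ^ 2) := by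
  have hF : ∀ k, betaCDF k (β ^ 2) ∈ Icc 0 1 := fun k => betaCDF_sq_mem_Icc k ⟨h0.le, h1⟩
  calc 1 - pow21 lam β = poissonMean (2 * lam) fun k => 1 - betaCDF k (β ^ 2) := by
        rw [pow21_eq_poissonMean, poissonMean_sub
          (summable_pow_div_factorial_mul_of_mem_Icc _ fun _ => ⟨zero_le_one, le_rfl⟩)
          (summable_pow_div_factorial_mul_of_mem_Icc _ hF), poissonMean_const]
    _ ≤ poissonMean (2 * lam) fun k => (1 - β ^ 2) / (2 * β) * (1 - β ^ 2) ^ k :=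
        poissonMean_mono (by positivity)
          (fun k => (one_sub_betaCDF_sq_le k h0 h1).trans_eq (by rw [pow_succ]; ring))
          (summable_pow_div_factorial_mul_of_mem_Icc _ fun k =>
            ⟨by linarith [(hF k).2], by linarith [(hF k).1]⟩)
          (summable_pow_div_factorial_mul_pow _ _ _)
    _ = (1 - β ^ 2) / (2 * β) * exp (-(2 * lam) * β ^ 2) := by
        rw [poissonMean_const_mul, poissonMean_pow]
        ring_nf

lemma eventually_pow21_lt_pow12_nhdsGT {lam : ℝ} (hl : 0 < lam) :
    ∀ᶠ α in 𝓝[>] 0, pow21 lam α < pow12 lam α := by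
  set Q := poissonMean (2 * lam) fun k => 2 * invBeta k
  have hQ : Q < 1 + lam := by
    simpa using poissonMean_two_mul_invBeta_lt (mul_pos two_pos hl)
  have hslope : ∀ᶠ α in 𝓝[>] 0, Q < α⁻¹ * pow12 lam α := by
    have hzero : pow12 lam 0 = 0 := by simp [pow12_eq]
    simpa [hzero] using (hasDerivAt_pow12 lam).tendsto_slope_zero_right.eventually
      (lt_mem_nhds hQ)
  filter_upwards [hslope, Ioo_mem_nhdsGT one_pos] with α hα ⟨h0, h1⟩
  calc pow21 lam α ≤ Q * α := pow21_le hl.le h0.le h1.le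
    _ < pow12 lam α := by rwa [lt_inv_mul_iff₀ h0, mul_comm] at hα

lemma eventually_pow12_lt_pow21_nhdsLT {lam : ℝ} (hl : 0 < lam) :
    ∀ᶠ β in 𝓝[<] 1, pow12 lam β < pow21 lam β := by
  have hcmp : ∀ᶠ β in 𝓝 (1 : ℝ),
      (1 + β) / (2 * β) * exp (-(2 * lam) * β ^ 2) < exp (-(lam / 2) * (β * (2 - β))) := by
    refine ContinuousAt.eventually_lt (by fun_prop (disch := norm_num)) (by fun_prop) ?_
    norm_num
    linarith
  filter_upwards [eventually_nhdsWithin_of_eventually_nhds hcmp, Ioo_mem_nhdsLT one_pos]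
    with β hβ ⟨h0, h1⟩
  have h1β : 0 < 1 - β := sub_pos.2 h1
  rw [pow12_eq]
  calc 1 - (1 - β) * exp (-(lam / 2) * (β * (2 - β)))
      < 1 - (1 - β) * ((1 + β) / (2 * β) * exp (-(2 * lam) * β ^ 2)) := by gcongr
    _ = 1 - (1 - β ^ 2) / (2 * β) * exp (-(2 * lam) * β ^ 2) := by ring
    _ ≤ pow21 lam β := by linarith [one_sub_pow21_le hl.le h0 h1.le]

/-- Proposition 4.3, case `l = 1` (`N = 3`): for each `λ > 0` there is `0 < α₁*(λ) < 1` with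
`π_α(λ;1,2) > π_α(4λ;2,1)` for all `0 < α < α₁*(λ)`, with equality at `α = α₁*(λ)`. -/
theorem prop_4_3_l_eq_one :
    ∀ lam : ℝ, 0 < lam → ∃ αstar : ℝ, 0 < αstar ∧ αstar < 1 ∧
      (∀ α : ℝ, 0 < α → α < αstar → pow12 lam α > pow21 lam α) ∧
      pow12 lam αstar = pow21 lam αstar := by
  intro lam hl
  obtain ⟨a, ha, hsmall⟩ := mem_nhdsGT_iff_exists_Ioc_subset.1 (eventually_pow21_lt_pow12_nhdsGT hl)
  obtain ⟨b, hb, hb0, hb1⟩ :=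
    ((eventually_pow12_lt_pow21_nhdsLT hl).and (Ioo_mem_nhdsLT one_pos)).exists
  have hab : a < b := not_le.1 fun hba => (hsmall ⟨hb0, hba⟩).not_gt hb
  obtain ⟨c, ⟨hac, hcb⟩, hc, hpos⟩ := exists_first_zero (f := fun α => pow12 lam α - pow21 lam α)
    hab.le ((continuous_pow12 lam).continuousOn.sub
      ((continuousOn_pow21 lam).mono (Icc_subset_Icc (le_of_lt ha) hb1.le)))
    (sub_pos.2 (hsmall ⟨ha, le_rfl⟩)) (sub_nonpos.2 hb.le)
  refine ⟨c, lt_trans ha hac, hcb.trans_lt hb1, fun α h0 hα => ?_, sub_eq_zero.1 hc⟩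
  rcases le_or_gt α a with h | h
  · exact hsmall ⟨h0, h⟩
  · exact sub_pos.1 (hpos α ⟨h.le, hα⟩)
end

section
/- For every natural number k, 1 + k/2 ≥ Γ(3/2 + k)/(Γ(3/2)·k!), i.e. Γ(k + 3/2) ≤ (1 + k/2)·Γ(3/2)·k!, with equality if and only if k = 0 or k = 1 (strict inequality for all k ≥ 2). -/
open Real

/-- `Γ(a + k) / (Γ(a) k!)`, i.e. the rising factorial `a⁽ᵏ⁾` divided by `k!`. -/
noncomputable def gammaRatio (a : ℝ) (k : ℕ) : ℝ :=
  Gamma (a + k) / (Gamma a * k.factorial)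

lemma gammaRatio_zero {a : ℝ} (ha : Gamma a ≠ 0) : gammaRatio a 0 = 1 := by
  simp [gammaRatio, ha]

lemma gammaRatio_succ {a : ℝ} {k : ℕ} (hak : a + k ≠ 0) :
    gammaRatio a (k + 1) = (a + k) / (k + 1) * gammaRatio a k := by
  rw [gammaRatio, gammaRatio, Nat.cast_succ, ← add_assoc, Gamma_add_one hak, Nat.factorial_succ,
    Nat.cast_mul, Nat.cast_succ]
  field_simp

lemma gammaRatio_three_halves_zero : gammaRatio (3 / 2) 0 = 1 :=
  gammaRatio_zero (Gamma_pos_of_pos (by norm_num)).ne'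

/-- Comparing the ratios `(k + 3/2)/(k + 1)` and `(k + 3)/(k + 2)` of consecutive terms:
`(k + 3/2)(k + 2) ≤ (k + 3)(k + 1)`, with equality only at `k = 0`. -/
lemma gammaRatio_three_halves_succ_le {k : ℕ} (hk : gammaRatio (3 / 2) k ≤ 1 + k / 2) :
    gammaRatio (3 / 2) (k + 1) ≤ 1 + (k + 1 : ℕ) / 2 ∧
      (0 < k → gammaRatio (3 / 2) (k + 1) < 1 + (k + 1 : ℕ) / 2) := by
  have hstep : gammaRatio (3 / 2) (k + 1) ≤ (3 / 2 + k) / (k + 1) * (1 + k / 2) := by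
    rw [gammaRatio_succ (by positivity)]
    gcongr
  have hbound : (3 / 2 + k) / (k + 1) * (1 + k / 2 : ℝ) = 1 + (k + 1 : ℕ) / 2 - k / (4 * (k + 1)) := by
    push_cast
    field_simp
    ring
  rw [hbound] at hstep
  refine ⟨hstep.trans (sub_le_self _ (by positivity)), fun hpos => hstep.trans_lt ?_⟩
  have : (0 : ℝ) < k := Nat.cast_pos.mpr hpos
  exact sub_lt_self _ (by positivity)

lemma gammaRatio_three_halves_le (k : ℕ) : gammaRatio (3 / 2) k ≤ 1 + k / 2 := by
  induction k with
  | zero => simp [gammaRatio_three_halves_zero]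
  | succ k ih => exact (gammaRatio_three_halves_succ_le ih).1

lemma gammaRatio_three_halves_lt {k : ℕ} (hk : 2 ≤ k) : gammaRatio (3 / 2) k < 1 + k / 2 := by
  obtain ⟨m, rfl⟩ := Nat.exists_eq_add_of_le' hk
  exact (gammaRatio_three_halves_succ_le (gammaRatio_three_halves_le (m + 1))).2 m.succ_pos

lemma gammaRatio_three_halves_one : gammaRatio (3 / 2) 1 = 3 / 2 := by
  have h := gammaRatio_succ (a := 3 / 2) (k := 0) (by norm_num)
  rw [gammaRatio_three_halves_zero] at h
  simpa using h

/-- Inequality (ineqBBB) in Proposition 4.3 (`l = 1`, `N = 3`):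
`1 + k/2 ≥ Γ(3/2 + k)/(Γ(3/2)·k!)`, with equality iff `k = 0` or `k = 1`. -/
theorem ineqBBB (k : ℕ) :
    1 + (k : ℝ) / 2 ≥ Real.Gamma (3 / 2 + (k : ℝ)) / (Real.Gamma (3 / 2) * (Nat.factorial k : ℝ)) ∧
    (1 + (k : ℝ) / 2 = Real.Gamma (3 / 2 + (k : ℝ)) / (Real.Gamma (3 / 2) * (Nat.factorial k : ℝ))
      ↔ k = 0 ∨ k = 1) := by
  change gammaRatio (3 / 2) k ≤ 1 + k / 2 ∧ (1 + k / 2 = gammaRatio (3 / 2) k ↔ k = 0 ∨ k = 1)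
  refine ⟨gammaRatio_three_halves_le k, fun heq => ?_, ?_⟩
  · by_contra hk
    exact heq.not_gt (gammaRatio_three_halves_lt (by omega))
  · rintro (rfl | rfl)
    · simp [gammaRatio_three_halves_zero]
    · rw [gammaRatio_three_halves_one]
      norm_num
end

section
/- For every natural number k, 3/4 + 9k/8 + 9k(k−1)/64 ≥ Γ(5/2 + k)/(Γ(1/2)·k!), with equality if and only if k ∈ {0, 1, 2} (strict inequality for all k ≥ 3). -/
/-!
Write `w k = Γ(5/2 + k) / (Γ(1/2) k!)` and `p k = 3/4 + 9k/8 + 9k(k-1)/64`. From `Γ(s + 1) = s Γ(s)`,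
`(k + 1) w (k + 1) = (k + 5/2) w k`, while a direct computation gives
`(k + 1) p (k + 1) = (k + 5/2) p k + 9k(k-1)/128`. Hence the defect `d = p - w` satisfies
`(k + 1) d (k + 1) = (k + 5/2) d k + 9k(k-1)/128` with `d 0 = 0`: the forcing term vanishes
exactly for `k ∈ {0, 1}`, so `d` is zero up to `k = 2` and positive from `k = 3` on.
-/

open Real

theorem succ_mul_Gamma_div_factorial_succ (a c : ℝ) (k : ℕ) (ha : a + k ≠ 0) :
    (k + 1) * (Gamma (a + (k + 1 : ℕ)) / (c * (k + 1).factorial)) =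
      (a + k) * (Gamma (a + k) / (c * k.factorial)) := by
  rw [Nat.cast_succ, ← add_assoc, Gamma_add_one ha, Nat.factorial_succ]
  push_cast
  rcases eq_or_ne c 0 with rfl | hc
  · simp
  · field_simp

theorem Gamma_five_halves_div_Gamma_one_half : Gamma (5 / 2) / Gamma (1 / 2) = 3 / 4 := by
  have hpos : 0 < Gamma (1 / 2) := Gamma_pos_of_pos (by norm_num)
  rw [show (5 / 2 : ℝ) = 1 / 2 + 1 + 1 by norm_num, Gamma_add_one (by norm_num),
    Gamma_add_one (by norm_num)]
  field_simp
  norm_num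

section Recurrence

variable {c : ℝ} {d g : ℕ → ℝ}

theorem nonneg_of_succ_mul_eq (hc : 0 ≤ c) (hg : ∀ k, 0 ≤ g k)
    (hd : ∀ k : ℕ, (k + 1) * d (k + 1) = (k + c) * d k + g k) (h0 : 0 ≤ d 0) (k : ℕ) :
    0 ≤ d k := by
  induction k with
  | zero => exact h0
  | succ k ih =>
    have : 0 ≤ (k + 1 : ℝ) * d (k + 1) := by
      rw [hd]; have := hg k; positivity
    exact nonneg_of_mul_nonneg_right this (by positivity)

theorem pos_of_succ_mul_eq (hc : 0 < c) (hg : ∀ k, 0 ≤ g k)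
    (hd : ∀ k : ℕ, (k + 1) * d (k + 1) = (k + c) * d k + g k) {n : ℕ} (hn : 0 < d n) :
    ∀ k, n ≤ k → 0 < d k := by
  intro k hk
  induction k, hk using Nat.le_induction with
  | base => exact hn
  | succ k _ ih =>
    have : 0 < (k + 1 : ℝ) * d (k + 1) := by
      rw [hd]; have := hg k; positivity
    exact pos_of_mul_pos_right this (by positivity)

end Recurrence

noncomputable def cccDefect (k : ℕ) : ℝ :=
  3 / 4 + 9 * (k : ℝ) / 8 + 9 * (k : ℝ) * ((k : ℝ) - 1) / 64 -
    Gamma (5 / 2 + (k : ℝ)) / (Gamma (1 / 2) * (k.factorial : ℝ))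

theorem cccDefect_zero : cccDefect 0 = 0 := by
  norm_num [cccDefect, Gamma_five_halves_div_Gamma_one_half]

theorem succ_mul_cccDefect_succ (k : ℕ) :
    (k + 1) * cccDefect (k + 1) = (k + 5 / 2) * cccDefect k + 9 * k * (k - 1) / 128 := by
  have hw := succ_mul_Gamma_div_factorial_succ (5 / 2) (Gamma (1 / 2)) k (by positivity)
  simp only [cccDefect] at hw ⊢
  push_cast at hw ⊢
  linear_combination -hw

theorem natCast_mul_natCast_sub_one_div_nonneg (k : ℕ) : 0 ≤ 9 * (k : ℝ) * (k - 1) / 128 := by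
  rcases Nat.eq_zero_or_pos k with rfl | hk
  · simp
  · have : (1 : ℝ) ≤ k := by exact_mod_cast hk
    have : 0 ≤ (k : ℝ) - 1 := by linarith
    positivity

theorem cccDefect_nonneg (k : ℕ) : 0 ≤ cccDefect k :=
  nonneg_of_succ_mul_eq (by norm_num)
    natCast_mul_natCast_sub_one_div_nonneg
    succ_mul_cccDefect_succ cccDefect_zero.ge k

theorem cccDefect_eq_zero_iff (k : ℕ) : cccDefect k = 0 ↔ k ≤ 2 := by
  have hd1 := succ_mul_cccDefect_succ 0
  have hd2 := succ_mul_cccDefect_succ 1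
  have hd3 := succ_mul_cccDefect_succ 2
  norm_num [cccDefect_zero] at hd1
  norm_num [hd1] at hd2
  norm_num [hd2] at hd3
  have hpos : ∀ k, 3 ≤ k → 0 < cccDefect k :=
    pos_of_succ_mul_eq (by norm_num)
      natCast_mul_natCast_sub_one_div_nonneg
      succ_mul_cccDefect_succ (by linarith : 0 < cccDefect 3)
  constructor
  · intro hk
    by_contra! hlt
    exact (hpos k hlt).ne' hk
  · intro hk
    interval_cases k
    · exact cccDefect_zero
    · exact hd1
    · exact hd2

/-- Inequality (CCC) in the proof of Proposition 4.3 for `l = 2` (`N = 5`):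
`3/4 + 9k/8 + 9k(k-1)/64 ≥ Γ(5/2 + k)/(Γ(1/2)·k!)`, with equality iff `k ∈ {0, 1, 2}`. -/
theorem ineqCCC (k : ℕ) :
    3 / 4 + 9 * (k : ℝ) / 8 + 9 * (k : ℝ) * ((k : ℝ) - 1) / 64
      ≥ Real.Gamma (5 / 2 + (k : ℝ)) / (Real.Gamma (1 / 2) * (Nat.factorial k : ℝ)) ∧
    (3 / 4 + 9 * (k : ℝ) / 8 + 9 * (k : ℝ) * ((k : ℝ) - 1) / 64
      = Real.Gamma (5 / 2 + (k : ℝ)) / (Real.Gamma (1 / 2) * (Nat.factorial k : ℝ))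
      ↔ k = 0 ∨ k = 1 ∨ k = 2) := by
  constructor
  · exact sub_nonneg.mp (cccDefect_nonneg k)
  · rw [← sub_eq_zero, ← cccDefect, cccDefect_eq_zero_iff]
    omega
end

section
/- For every integer l ≥ 1 and every integer k ≥ 1, the function δ ↦ ((1/2 + δ)/(1 + δ))^k · Σ_{r=0}^k C(k,r)·(1 + 2δ)^{−r}·Γ(l + 1/2 + r)/Γ(1/2 + r) is strictly decreasing on [0, ∞). -/
/-!
Writing `u = (1 + 2δ)⁻¹`, the binomial theorem gives `((1/2 + δ)/(1 + δ))^k = (∑ C(k,r) u^r)⁻¹`,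
so the quantity is the mean of the increasing sequence `g r = Γ(l + 1/2 + r)/Γ(1/2 + r)` under
the weights `C(k,r) u^r`. Raising `u` tilts these weights by the increasing factor `(v/u)^r`,
which raises the mean by the weighted Chebyshev sum inequality; and `u` decreases in `δ`.
-/

open Real Finset

theorem Real.strictMono_Gamma_add_div_Gamma {c x : ℝ} (hc : 0 < c) (hx : 0 < x) :
    StrictMono fun r : ℕ => Gamma (c + x + r) / Gamma (x + r) := by
  refine strictMono_nat_of_lt_succ fun r => ?_
  have hxr : 0 < x + r := by positivity
  have hcxr : 0 < c + x + r := by positivity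
  simp only [Nat.cast_succ, ← add_assoc, Gamma_add_one hxr.ne', Gamma_add_one hcxr.ne',
    mul_div_mul_comm]
  exact lt_mul_of_one_lt_left (div_pos (Gamma_pos_of_pos hcxr) (Gamma_pos_of_pos hxr))
    ((one_lt_div hxr).2 (by linarith))

theorem Finset.two_mul_sub_sum_mul_sum_eq_sum_sum {ι R : Type*} [CommRing R] (s : Finset ι)
    (w f g : ι → R) :
    2 * ((∑ i ∈ s, w i) * (∑ i ∈ s, w i * f i * g i) -
        (∑ i ∈ s, w i * f i) * ∑ i ∈ s, w i * g i) =
      ∑ i ∈ s, ∑ j ∈ s, w i * w j * ((f i - f j) * (g i - g j)) := by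
  have hX : (∑ i ∈ s, w i) * (∑ i ∈ s, w i * f i * g i) -
      (∑ i ∈ s, w i * f i) * ∑ i ∈ s, w i * g i =
      ∑ i ∈ s, ∑ j ∈ s, w i * w j * (f j * g j - f i * g j) := by
    simp only [sum_mul_sum, ← sum_sub_distrib]
    exact sum_congr rfl fun i _ => sum_congr rfl fun j _ => by ring
  have hswap : ∑ i ∈ s, ∑ j ∈ s, w i * w j * (f j * g j - f i * g j) =
      ∑ i ∈ s, ∑ j ∈ s, w i * w j * (f i * g i - f j * g i) := by
    rw [sum_comm]
    simp only [mul_comm (w _) (w _)]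
  rw [two_mul, hX]
  nth_rw 2 [hswap]
  rw [← sum_add_distrib]
  refine sum_congr rfl fun i _ => ?_
  rw [← sum_add_distrib]
  exact sum_congr rfl fun j _ => by ring

theorem Finset.sum_mul_sum_lt_sum_mul_sum {ι R : Type*} [LinearOrder ι] [CommRing R]
    [LinearOrder R] [IsStrictOrderedRing R] {s : Finset ι} {w f g : ι → R}
    (hw : ∀ i ∈ s, 0 < w i) (hf : StrictMonoOn f s) (hg : StrictMonoOn g s) (hs : s.Nontrivial) :
    (∑ i ∈ s, w i * f i) * (∑ i ∈ s, w i * g i) <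
      (∑ i ∈ s, w i) * ∑ i ∈ s, w i * f i * g i := by
  have hterm : ∀ i ∈ s, ∀ j ∈ s, i ≠ j → 0 < (f i - f j) * (g i - g j) := by
    intro i hi j hj hij
    rcases hij.lt_or_gt with h | h
    · exact mul_pos_of_neg_of_neg (sub_neg.2 (hf hi hj h)) (sub_neg.2 (hg hi hj h))
    · exact mul_pos (sub_pos.2 (hf hj hi h)) (sub_pos.2 (hg hj hi h))
  have hnonneg : ∀ i ∈ s, ∀ j ∈ s, 0 ≤ w i * w j * ((f i - f j) * (g i - g j)) := by
    intro i hi j hj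
    rcases eq_or_ne i j with rfl | hij
    · simp
    · exact (mul_pos (mul_pos (hw i hi) (hw j hj)) (hterm i hi j hj hij)).le
  obtain ⟨i, hi, j, hj, hij⟩ := hs
  have hpos : 0 < ∑ i ∈ s, ∑ j ∈ s, w i * w j * ((f i - f j) * (g i - g j)) :=
    sum_pos' (fun i hi => sum_nonneg (hnonneg i hi))
      ⟨i, hi, sum_pos' (hnonneg i hi)
        ⟨j, hj, mul_pos (mul_pos (hw i hi) (hw j hj)) (hterm i hi j hj hij)⟩⟩
  rw [← two_mul_sub_sum_mul_sum_eq_sum_sum] at hpos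
  linarith

theorem strictMonoOn_sum_mul_pow_mul_div_sum_mul_pow {s : Finset ℕ} {c g : ℕ → ℝ}
    (hc : ∀ i ∈ s, 0 < c i) (hg : StrictMonoOn g s) (hs : s.Nontrivial) :
    StrictMonoOn (fun u : ℝ => (∑ i ∈ s, c i * u ^ i * g i) / ∑ i ∈ s, c i * u ^ i)
      (Set.Ioi 0) := by
  intro u (hu : 0 < u) v (hv : 0 < v) huv
  have htilt : ∀ i, c i * v ^ i = c i * u ^ i * (v / u) ^ i := fun i => by
    rw [div_pow, mul_assoc, mul_div_cancel₀ _ (pow_pos hu i).ne']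
  have hcheb := sum_mul_sum_lt_sum_mul_sum (fun i hi => mul_pos (hc i hi) (pow_pos hu i))
    ((pow_right_strictMono₀ ((one_lt_div hu).2 huv)).strictMonoOn _) hg hs
  have hpos : ∀ t : ℝ, 0 < t → 0 < ∑ i ∈ s, c i * t ^ i := fun t ht =>
    sum_pos (fun i hi => mul_pos (hc i hi) (pow_pos ht i)) hs.nonempty
  rw [div_lt_div_iff₀ (hpos u hu) (hpos v hv)]
  simp only [htilt]
  linarith

theorem ineqB_lhs_eq_weighted_mean (k : ℕ) (g : ℕ → ℝ) {δ : ℝ} (hδ : 0 ≤ δ) :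
    ((1 / 2 + δ) / (1 + δ)) ^ k *
        ∑ r ∈ range (k + 1), (k.choose r : ℝ) / (1 + 2 * δ) ^ r * g r =
      (∑ r ∈ range (k + 1), (k.choose r : ℝ) * (1 + 2 * δ)⁻¹ ^ r * g r) /
        ∑ r ∈ range (k + 1), (k.choose r : ℝ) * (1 + 2 * δ)⁻¹ ^ r := by
  set u := (1 + 2 * δ)⁻¹ with hu
  have hbinom : ∑ r ∈ range (k + 1), (k.choose r : ℝ) * u ^ r = (u + 1) ^ k := by
    rw [add_pow]
    exact sum_congr rfl fun r _ => by ring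
  have hratio : (1 / 2 + δ) / (1 + δ) = (u + 1)⁻¹ := by
    rw [hu]
    field_simp
    ring
  rw [hbinom, hratio, inv_pow, ← div_eq_inv_mul]
  simp only [hu, inv_pow, div_eq_mul_inv]

/-- The left-hand side of the key sufficient inequality (ineqB) in Proposition 4.3,
`δ ↦ ((1/2+δ)/(1+δ))^k Σ_{r=0}^k C(k,r)(1+2δ)^{-r} Γ(l+1/2+r)/Γ(1/2+r)`,
is strictly decreasing in `δ` on `[0, ∞)` for every `l ≥ 1` and `k ≥ 1`. -/
theorem ineqB_lhs_strictAnti (l : ℕ) (hl : 1 ≤ l) (k : ℕ) (hk : 1 ≤ k) :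
    StrictAntiOn (fun δ : ℝ =>
      ((1 / 2 + δ) / (1 + δ)) ^ k *
        ∑ r ∈ Finset.range (k + 1), (Nat.choose k r : ℝ) / (1 + 2 * δ) ^ r *
          (Real.Gamma ((l : ℝ) + 1 / 2 + (r : ℝ)) / Real.Gamma (1 / 2 + (r : ℝ))))
      (Set.Ici 0) := by
  have hGamma := strictMono_Gamma_add_div_Gamma (c := l) (x := 1 / 2) (by positivity) one_half_pos
  have hmean := strictMonoOn_sum_mul_pow_mul_div_sum_mul_pow (s := range (k + 1))
    (c := fun r => (k.choose r : ℝ))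
    (fun r hr => Nat.cast_pos.2 (Nat.choose_pos (Nat.lt_succ_iff.1 (mem_range.1 hr))))
    (hGamma.strictMonoOn _) (range_nontrivial (by omega))
  intro x hx y hy hxy
  rw [Set.mem_Ici] at hx hy
  simp only [ineqB_lhs_eq_weighted_mean k _ hx, ineqB_lhs_eq_weighted_mean k _ hy]
  have hx' : 0 < 1 + 2 * x := by positivity
  have hy' : 0 < 1 + 2 * y := by positivity
  exact hmean (inv_pos.2 hy') (inv_pos.2 hx') ((inv_lt_inv₀ hy' hx').2 (by linarith))
end
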